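/- Let (Cₙ)ₙ be a direct system of cochain complexes over the truncated Novikov ring Λ_E, each splitting as a direct sum Cₙ = Cₙ^L ⊕ Cₙ^U of graded submodules, such that: (a) every component of the differential and of every transition map from Cₙ^L to C_m^U is zero in Λ_E (because its Novikov weight exceeds E), and (b) every transition map component Cₙ^U → C_{n+1}^U is zero in Λ_E. Then the inclusion of the subsystem (Cₙ^L) induces an isomorphism colimₙ Cₙ^L ≅ colimₙ Cₙ of complexes over Λ_E. -/

import Mathlib

/-!
The inclusions `Cₙ^L → Cₙ` form a morphism of direct systems whose components are injective, so
the induced map of colimits is injective (direct limits are exact). Condition (b) together with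
(a) says that every transition map `Cₙ → Cₙ₊₁` lands in `Cₙ₊₁^L`, so every element of `colim Cₙ`
already comes from the lower subsystem. Condition (a) for the differential makes the lower
differential the restriction of the full one, which gives compatibility with differentials.
-/

noncomputable section

section IgnoringUpperOrbits

variable {R : Type*} [CommRing R]

/-- Composite transition maps of a direct system with one-step maps `t n : C n →ₗ C (n+1)`. -/
def chainUp {C : ℕ → Type*} [∀ n, AddCommGroup (C n)] [∀ n, Module R (C n)]
    (t : ∀ n, C n →ₗ[R] C (n + 1)) : ∀ i j : ℕ, i ≤ j → C i →ₗ[R] C j := fun i _j h =>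
  Nat.leRec (motive := fun j _ => C i →ₗ[R] C j) LinearMap.id
    (fun k _ g => (t k).comp g) h

variable (L U : ℕ → Type*)
  [∀ n, AddCommGroup (L n)] [∀ n, Module R (L n)]
  [∀ n, AddCommGroup (U n)] [∀ n, Module R (U n)]

/-- The lower-to-lower component of a map on `Cₙ = Cₙ^L ⊕ Cₙ^U`. -/
def lowerPart {n m : ℕ} (T : (L n × U n) →ₗ[R] (L m × U m)) : L n →ₗ[R] L m :=
  (LinearMap.fst R (L m) (U m)).comp (T.comp (LinearMap.inl R (L n) (U n)))

end IgnoringUpperOrbits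

namespace Module.DirectLimit

variable {R : Type*} [Semiring R] {ι : Type*} [Preorder ι] [DecidableEq ι]
  {G G' : ι → Type*} [∀ i, AddCommMonoid (G i)] [∀ i, Module R (G i)]
  [∀ i, AddCommMonoid (G' i)] [∀ i, Module R (G' i)]
  {f : ∀ i j, i ≤ j → G i →ₗ[R] G j} {f' : ∀ i j, i ≤ j → G' i →ₗ[R] G' j}

theorem of_comp_apply_f_eq (g : ∀ i, G i →ₗ[R] G' i)
    (hg : ∀ i j h, g j ∘ₗ f i j h = f' i j h ∘ₗ g i) (i j : ι) (hij : i ≤ j) (x : G i) :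
    (of R ι G' f' j ∘ₗ g j) (f i j hij x) = (of R ι G' f' i ∘ₗ g i) x := by
  simp only [LinearMap.comp_apply, ← LinearMap.comp_apply (g j), hg, of_f]

variable [IsDirectedOrder ι]

theorem map_surjective (g : ∀ i, G i →ₗ[R] G' i) (hg : ∀ i j h, g j ∘ₗ f i j h = f' i j h ∘ₗ g i)
    (hsurj : ∀ i (y : G' i), ∃ j hij x, g j x = f' i j hij y) :
    Function.Surjective (map g hg) := by
  cases isEmpty_or_nonempty ι
  · exact fun z => ⟨0, Subsingleton.elim _ _⟩
  intro z
  obtain ⟨i, y, rfl⟩ := exists_of z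
  obtain ⟨j, hij, x, hx⟩ := hsurj i y
  exact ⟨of R ι G f j x, by rw [map_apply_of, hx, of_f]⟩

variable [DirectedSystem G' (f' · · ·)]

theorem map_injective (g : ∀ i, G i →ₗ[R] G' i) (hg : ∀ i j h, g j ∘ₗ f i j h = f' i j h ∘ₗ g i)
    (hinj : ∀ i, Function.Injective (g i)) : Function.Injective (map g hg) := by
  cases isEmpty_or_nonempty ι
  · exact Function.injective_of_subsingleton _
  intro z w hzw
  obtain ⟨i, x, y, rfl, rfl⟩ := exists_of₂ z w
  simp only [map_apply_of] at hzw
  obtain ⟨j, hij, hxy⟩ := exists_eq_of_of_eq hzw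
  have hgxy : g j (f i j hij x) = g j (f i j hij y) := by
    simpa only [← LinearMap.comp_apply, hg] using hxy
  rw [← of_f (hij := hij), hinj j hgxy, of_f]

end Module.DirectLimit

section chainUp

variable {R : Type*} [CommRing R] {C C' : ℕ → Type*}
  [∀ n, AddCommGroup (C n)] [∀ n, Module R (C n)]
  [∀ n, AddCommGroup (C' n)] [∀ n, Module R (C' n)]

theorem chainUp_self (t : ∀ n, C n →ₗ[R] C (n + 1)) (i : ℕ) (h : i ≤ i) :
    chainUp t i i h = LinearMap.id := by
  simp [chainUp, Nat.leRec_self]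

theorem chainUp_succ (t : ∀ n, C n →ₗ[R] C (n + 1)) (i j : ℕ) (h : i ≤ j) (h' : i ≤ j + 1) :
    chainUp t i (j + 1) h' = t j ∘ₗ chainUp t i j h := by
  simp [chainUp, Nat.leRec_succ _ _ h]

theorem chainUp_self_succ (t : ∀ n, C n →ₗ[R] C (n + 1)) (i : ℕ) (h : i ≤ i + 1) :
    chainUp t i (i + 1) h = t i := by
  rw [chainUp_succ t i i le_rfl, chainUp_self, LinearMap.comp_id]

instance chainUp.directedSystem (t : ∀ n, C n →ₗ[R] C (n + 1)) :
    DirectedSystem C (chainUp t · · ·) where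
  map_self i x := by rw [chainUp_self]; rfl
  map_map {k j i} hij hjk x := by
    induction k, hjk using Nat.le_induction with
    | base => rw [chainUp_self]; rfl
    | succ m hm ih =>
      rw [chainUp_succ t j m hm, chainUp_succ t i m (hij.trans hm)]
      simp [ih]

theorem comp_chainUp_of_comp_eq {t : ∀ n, C n →ₗ[R] C (n + 1)} {t' : ∀ n, C' n →ₗ[R] C' (n + 1)}
    (φ : ∀ n, C n →ₗ[R] C' n) (hφ : ∀ n, φ (n + 1) ∘ₗ t n = t' n ∘ₗ φ n) (i j : ℕ) (h : i ≤ j) :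
    φ j ∘ₗ chainUp t i j h = chainUp t' i j h ∘ₗ φ i := by
  induction j, h using Nat.le_induction with
  | base => rw [chainUp_self, chainUp_self, LinearMap.comp_id, LinearMap.id_comp]
  | succ m hm ih =>
    rw [chainUp_succ t i m hm, chainUp_succ t' i m hm, ← LinearMap.comp_assoc, hφ,
      LinearMap.comp_assoc, ih, LinearMap.comp_assoc]

end chainUp

section lowerPart

variable {R : Type*} [CommRing R] {L U : ℕ → Type*}
  [∀ n, AddCommGroup (L n)] [∀ n, Module R (L n)]
  [∀ n, AddCommGroup (U n)] [∀ n, Module R (U n)]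

theorem inl_comp_lowerPart {n m : ℕ} (B : (L n × U n) →ₗ[R] (L m × U m))
    (hB : ∀ x : L n, (B (x, 0)).2 = 0) :
    LinearMap.inl R (L m) (U m) ∘ₗ lowerPart L U B = B ∘ₗ LinearMap.inl R (L n) (U n) :=
  LinearMap.ext fun x => Prod.ext rfl (hB x).symm

theorem lowerPart_comp {n m k : ℕ} (A : (L m × U m) →ₗ[R] (L k × U k))
    (B : (L n × U n) →ₗ[R] (L m × U m)) (hB : ∀ x : L n, (B (x, 0)).2 = 0) :
    lowerPart L U (A ∘ₗ B) = lowerPart L U A ∘ₗ lowerPart L U B :=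
  LinearMap.ext fun x =>
    congrArg (fun p => (A p).1) (Prod.ext rfl (hB x) : B (x, 0) = ((B (x, 0)).1, 0))

theorem inl_fst_of_snd_eq_zero {n m : ℕ} (B : (L n × U n) →ₗ[R] (L m × U m))
    (hBL : ∀ x : L n, (B (x, 0)).2 = 0) (hBU : ∀ u : U n, (B (0, u)).2 = 0) (y : L n × U n) :
    LinearMap.inl R (L m) (U m) (B y).1 = B y := by
  refine Prod.ext rfl (Eq.symm ?_)
  calc (B y).2 = (B (y.1, 0)).2 + (B (0, y.2)).2 := by
        rw [← Prod.snd_add, ← map_add, Prod.mk_add_mk, add_zero, zero_add]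
    _ = 0 := by rw [hBL, hBU, add_zero]

end lowerPart

/-- "ignoring upper orbits".  Let `(Cₙ)` be a direct system of cochain
complexes over the truncated Novikov ring `Λ_E` (here an arbitrary ring `R`, the vanishing of
the relevant components over `Λ_E` being taken as hypotheses), each splitting as
`Cₙ = Cₙ^L ⊕ Cₙ^U`, such that (a) every component of the differential and of every transition
map from `Cₙ^L` to `C_m^U` vanishes (its Novikov weight exceeds `E`), and (b) every
upper-to-upper transition map component `Cₙ^U → C_{n+1}^U` vanishes.  Then the inclusion of
the lower subsystem `(Cₙ^L)` induces an isomorphism `colim Cₙ^L ≅ colim Cₙ` of complexes. -/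
theorem ignoring_upper_orbits
    (R : Type*) [CommRing R]
    (L U : ℕ → Type*)
    [∀ n, AddCommGroup (L n)] [∀ n, Module R (L n)]
    [∀ n, AddCommGroup (U n)] [∀ n, Module R (U n)]
    -- transition maps and differentials of the direct system of complexes
    (T : ∀ n, (L n × U n) →ₗ[R] (L (n + 1) × U (n + 1)))
    (D : ∀ n, (L n × U n) →ₗ[R] (L n × U n))
    (hTD : ∀ n, (T n).comp (D n) = (D (n + 1)).comp (T n))
    -- (a) lower-to-upper components of the differential and the transition maps vanish
    (hDLU : ∀ n (x : L n), (D n (x, 0)).2 = 0)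
    (hTLU : ∀ n (x : L n), (T n (x, 0)).2 = 0)
    -- (b) upper-to-upper components of the transition maps vanish
    (hTUU : ∀ n (u : U n), (T n (0, u)).2 = 0) :
    -- the canonical map `colim Cₙ^L → colim Cₙ` induced by the inclusions is an isomorphism
    -- of complexes: it is bijective and intertwines the induced differentials
    ∃ (hg : ∀ (i j : ℕ) (hij : i ≤ j) (x : L i),
        ((Module.DirectLimit.of R ℕ (fun n => L n × U n) (chainUp T) j).comp
          (LinearMap.inl R (L j) (U j))) (chainUp (fun n => lowerPart L U (T n)) i j hij x)
          = ((Module.DirectLimit.of R ℕ (fun n => L n × U n) (chainUp T) i).comp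
              (LinearMap.inl R (L i) (U i))) x)
      (hgL : ∀ (i j : ℕ) (hij : i ≤ j) (x : L i),
        ((Module.DirectLimit.of R ℕ L (chainUp (fun n => lowerPart L U (T n))) j).comp
          (lowerPart L U (D j))) (chainUp (fun n => lowerPart L U (T n)) i j hij x)
          = ((Module.DirectLimit.of R ℕ L (chainUp (fun n => lowerPart L U (T n))) i).comp
              (lowerPart L U (D i))) x)
      (hgC : ∀ (i j : ℕ) (hij : i ≤ j) (x : L i × U i),
        ((Module.DirectLimit.of R ℕ (fun n => L n × U n) (chainUp T) j).comp (D j))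
            (chainUp T i j hij x)
          = ((Module.DirectLimit.of R ℕ (fun n => L n × U n) (chainUp T) i).comp (D i)) x),
      Function.Bijective
        (Module.DirectLimit.lift R ℕ L (chainUp (fun n => lowerPart L U (T n)))
          (fun n => (Module.DirectLimit.of R ℕ (fun n => L n × U n) (chainUp T) n).comp
            (LinearMap.inl R (L n) (U n))) hg) ∧
      (Module.DirectLimit.lift R ℕ L (chainUp (fun n => lowerPart L U (T n)))
          (fun n => (Module.DirectLimit.of R ℕ (fun n => L n × U n) (chainUp T) n).comp
            (LinearMap.inl R (L n) (U n))) hg).comp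
        (Module.DirectLimit.lift R ℕ L (chainUp (fun n => lowerPart L U (T n)))
          (fun n => (Module.DirectLimit.of R ℕ L (chainUp (fun n => lowerPart L U (T n))) n).comp
            (lowerPart L U (D n))) hgL)
      = (Module.DirectLimit.lift R ℕ (fun n => L n × U n) (chainUp T)
          (fun n => (Module.DirectLimit.of R ℕ (fun n => L n × U n) (chainUp T) n).comp (D n))
          hgC).comp
        (Module.DirectLimit.lift R ℕ L (chainUp (fun n => lowerPart L U (T n)))
          (fun n => (Module.DirectLimit.of R ℕ (fun n => L n × U n) (chainUp T) n).comp
            (LinearMap.inl R (L n) (U n))) hg) := by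
  have hinl : ∀ n, LinearMap.inl R (L (n + 1)) (U (n + 1)) ∘ₗ lowerPart L U (T n) =
      T n ∘ₗ LinearMap.inl R (L n) (U n) := fun n => inl_comp_lowerPart (T n) (hTLU n)
  have hlowerD : ∀ n, lowerPart L U (D (n + 1)) ∘ₗ lowerPart L U (T n) =
      lowerPart L U (T n) ∘ₗ lowerPart L U (D n) := fun n => by
    rw [← lowerPart_comp _ _ (hTLU n), ← lowerPart_comp _ _ (hDLU n), hTD]
  have hinlC := comp_chainUp_of_comp_eq (C' := fun n => L n × U n)
    (fun n => LinearMap.inl R (L n) (U n)) hinl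
  have hDC := comp_chainUp_of_comp_eq D fun n => (hTD n).symm
  have hlowerDC := comp_chainUp_of_comp_eq (fun n => lowerPart L U (D n)) hlowerD
  refine ⟨Module.DirectLimit.of_comp_apply_f_eq _ hinlC,
    Module.DirectLimit.of_comp_apply_f_eq _ hlowerDC,
    Module.DirectLimit.of_comp_apply_f_eq _ hDC, ⟨?_, ?_⟩, ?_⟩
  · exact Module.DirectLimit.map_injective _ hinlC fun n => LinearMap.inl_injective
  · refine Module.DirectLimit.map_surjective _ hinlC fun i y => ⟨i + 1, i.le_succ, (T i y).1, ?_⟩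
    rw [chainUp_self_succ]
    exact inl_fst_of_snd_eq_zero (T i) (hTLU i) (hTUU i) y
  · ext n x
    simp only [LinearMap.comp_apply, Module.DirectLimit.lift_of]
    rw [← LinearMap.comp_apply (LinearMap.inl R _ _), inl_comp_lowerPart (D n) (hDLU n),
      LinearMap.comp_apply]
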